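/- Let $f : \mathbb{R}^2 \to \mathbb{R}$ be $C^2$ and suppose that for every rectangle $R = [r_1,s_1]\times[r_2,s_2]$ with $r \le s$, the integrals of $\partial_1\partial_2 f$ over the upper-left triangle $T_1$ (above the diagonal from $(r_1,r_2)$ to $(s_1,s_2)$) and the lower-right triangle $T_2$ (below that diagonal) are equal. Then for all $r \le s$, $\int_{[r_1, \frac{r_1+s_1}{2}] \times [\frac{r_2+s_2}{2}, s_2]} \partial_1\partial_2 f = \int_{[\frac{r_1+s_1}{2}, s_1] \times [r_2, \frac{r_2+s_2}{2}]} \partial_1\partial_2 f$. -/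

import Mathlib

open MeasureTheory

/-- The mixed partial derivative `∂₁∂₂ f`. -/
noncomputable def mixedPartial (f : ℝ × ℝ → ℝ) : ℝ × ℝ → ℝ :=
  fun p => deriv (fun x => deriv (fun y => f (x, y)) p.2) p.1

/-- Upper-left triangle of the rectangle `[r₁,s₁] × [r₂,s₂]` cut by the
diagonal from `(r₁,r₂)` to `(s₁,s₂)`. -/
def upperTriangle (r s : ℝ × ℝ) : Set (ℝ × ℝ) :=
  {p | r.1 ≤ p.1 ∧ p.1 ≤ s.1 ∧ r.2 ≤ p.2 ∧ p.2 ≤ s.2 ∧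
    (p.1 - r.1) * (s.2 - r.2) ≤ (p.2 - r.2) * (s.1 - r.1)}

/-- Lower-right triangle of the rectangle `[r₁,s₁] × [r₂,s₂]` cut by the
diagonal from `(r₁,r₂)` to `(s₁,s₂)`. -/
def lowerTriangle (r s : ℝ × ℝ) : Set (ℝ × ℝ) :=
  {p | r.1 ≤ p.1 ∧ p.1 ≤ s.1 ∧ r.2 ≤ p.2 ∧ p.2 ≤ s.2 ∧
    (p.2 - r.2) * (s.1 - r.1) ≤ (p.1 - r.1) * (s.2 - r.2)}

/-!
Split the triangles over the diagonal of `[r, s]` at the midpoint `m` of the diagonal: the upper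
triangle is the upper triangle of `[r, m]`, the upper-left quarter and the upper triangle of
`[m, s]`, up to null sets; symmetrically (via `Prod.swap`) for the lower triangle. Applying the
hypothesis to `[r, s]`, `[r, m]` and `[m, s]` and subtracting cancels all triangle terms and leaves
the two off-diagonal quarters.
-/

open Set

theorem upperTriangle_subset_Icc (r s : ℝ × ℝ) : upperTriangle r s ⊆ Icc r s :=
  fun _ ⟨h₁, h₂, h₃, h₄, _⟩ => ⟨⟨h₁, h₃⟩, ⟨h₂, h₄⟩⟩

theorem isClosed_upperTriangle (r s : ℝ × ℝ) : IsClosed (upperTriangle r s) :=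
  (isClosed_le continuous_const continuous_fst).inter <|
    (isClosed_le continuous_fst continuous_const).inter <|
    (isClosed_le continuous_const continuous_snd).inter <|
    (isClosed_le continuous_snd continuous_const).inter <|
    isClosed_le ((continuous_fst.sub continuous_const).mul continuous_const)
      ((continuous_snd.sub continuous_const).mul continuous_const)

theorem preimage_swap_upperTriangle (r s : ℝ × ℝ) :
    Prod.swap ⁻¹' upperTriangle r.swap s.swap = lowerTriangle r s := by
  ext p
  simp only [upperTriangle, lowerTriangle, mem_preimage, mem_ofPred_eq, Prod.fst_swap,
    Prod.snd_swap]
  tauto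

theorem mk_half_add_mem_Icc {r s : ℝ × ℝ} (h : r ≤ s) :
    ((r.1 + s.1) / 2, (r.2 + s.2) / 2) ∈ Icc r s := by
  obtain ⟨h₁, h₂⟩ := h
  exact ⟨⟨by dsimp; linarith, by dsimp; linarith⟩, ⟨by dsimp; linarith, by dsimp; linarith⟩⟩

theorem upperTriangle_eq_union {r s : ℝ × ℝ} (h : r ≤ s) :
    upperTriangle r s =
      upperTriangle r ((r.1 + s.1) / 2, (r.2 + s.2) / 2) ∪
        Icc r.1 ((r.1 + s.1) / 2) ×ˢ Icc ((r.2 + s.2) / 2) s.2 ∪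
        upperTriangle ((r.1 + s.1) / 2, (r.2 + s.2) / 2) s := by
  obtain ⟨h₁, h₂⟩ := h
  ext ⟨x, y⟩
  simp only [upperTriangle, mem_ofPred_eq, mem_union, mem_prod, mem_Icc]
  constructor
  · rintro ⟨hx₁, hx₂, hy₁, hy₂, hd⟩
    by_cases hx : x ≤ (r.1 + s.1) / 2
    · by_cases hy : (r.2 + s.2) / 2 ≤ y
      · exact Or.inl (Or.inr ⟨⟨hx₁, hx⟩, hy, hy₂⟩)
      · exact Or.inl (Or.inl ⟨hx₁, hx, hy₁, by linarith, by nlinarith⟩)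
    · have hy : (r.2 + s.2) / 2 ≤ y := by nlinarith
      exact Or.inr ⟨by linarith, hx₂, hy, hy₂, by nlinarith⟩
  · rintro ((⟨hx₁, hx₂, hy₁, hy₂, hd⟩ | ⟨⟨hx₁, hx₂⟩, hy₁, hy₂⟩) | ⟨hx₁, hx₂, hy₁, hy₂, hd⟩)
    · exact ⟨hx₁, by linarith, hy₁, by linarith, by nlinarith⟩
    · exact ⟨hx₁, by linarith, by linarith, hy₂, by nlinarith⟩
    · exact ⟨by linarith, hx₂, by linarith, hy₂, by nlinarith⟩

theorem volume_fst_preimage_singleton (a : ℝ) :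
    volume (Prod.fst ⁻¹' {a} : Set (ℝ × ℝ)) = 0 := by
  rw [← prod_univ, Measure.volume_eq_prod, Measure.prod_prod]
  simp

theorem volume_snd_preimage_singleton (a : ℝ) :
    volume (Prod.snd ⁻¹' {a} : Set (ℝ × ℝ)) = 0 := by
  rw [← univ_prod, Measure.volume_eq_prod, Measure.prod_prod]
  simp

theorem MeasureTheory.IntegrableOn.comp_swap_Icc {E : Type*} [NormedAddCommGroup E]
    {g : ℝ × ℝ → E} {r s : ℝ × ℝ} (hg : IntegrableOn g (Icc r s)) :
    IntegrableOn (fun p => g p.swap) (Icc r.swap s.swap) := by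
  have := (Measure.measurePreserving_swap (μ := (volume : Measure ℝ)) (ν := volume)
    |>.integrableOn_comp_preimage MeasurableEquiv.prodComm.measurableEmbedding).2 hg
  rw [Icc_prod_eq, preimage_swap_prod, Icc_prod_Icc] at this
  exact this

section VectorValued

variable {E : Type*} [NormedAddCommGroup E] [NormedSpace ℝ E] {g : ℝ × ℝ → E}

theorem deriv_comp_prodMk_left {x y : ℝ} (hg : DifferentiableAt ℝ g (x, y)) :
    deriv (fun x' => g (x', y)) x = fderiv ℝ g (x, y) (1, 0) :=
  (hg.hasFDerivAt.comp_hasDerivAt x ((hasDerivAt_id x).prodMk (hasDerivAt_const x y))).deriv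

theorem deriv_comp_prodMk_right {x y : ℝ} (hg : DifferentiableAt ℝ g (x, y)) :
    deriv (fun y' => g (x, y')) y = fderiv ℝ g (x, y) (0, 1) :=
  (hg.hasFDerivAt.comp_hasDerivAt y ((hasDerivAt_const y x).prodMk (hasDerivAt_id y))).deriv

theorem setIntegral_upperTriangle_eq {r s : ℝ × ℝ} (h : r ≤ s) (hg : IntegrableOn g (Icc r s)) :
    ∫ p in upperTriangle r s, g p =
      (∫ p in upperTriangle r ((r.1 + s.1) / 2, (r.2 + s.2) / 2), g p) +
        (∫ p in Icc r.1 ((r.1 + s.1) / 2) ×ˢ Icc ((r.2 + s.2) / 2) s.2, g p) +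
        ∫ p in upperTriangle ((r.1 + s.1) / 2, (r.2 + s.2) / 2) s, g p := by
  set m : ℝ × ℝ := ((r.1 + s.1) / 2, (r.2 + s.2) / 2)
  obtain ⟨hrm, hms⟩ : r ≤ m ∧ m ≤ s := mk_half_add_mem_Icc h
  have hQ : IntegrableOn g (Icc r.1 m.1 ×ˢ Icc m.2 s.2) := by
    rw [Icc_prod_Icc]
    exact hg.mono_set (Icc_subset_Icc ⟨le_rfl, hrm.2⟩ ⟨hms.1, le_rfl⟩)
  have hA := hg.mono_set ((upperTriangle_subset_Icc r m).trans (Icc_subset_Icc_right hms))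
  have hB := hg.mono_set ((upperTriangle_subset_Icc m s).trans (Icc_subset_Icc_left hrm))
  have hAQ : AEDisjoint volume (upperTriangle r m) (Icc r.1 m.1 ×ˢ Icc m.2 s.2) :=
    measure_mono_null (fun p ⟨⟨_, _, _, hp, _⟩, _, hp', _⟩ => le_antisymm hp hp')
      (volume_snd_preimage_singleton m.2)
  have hAQB : AEDisjoint volume (upperTriangle r m ∪ Icc r.1 m.1 ×ˢ Icc m.2 s.2)
      (upperTriangle m s) :=
    measure_mono_null (fun p ⟨hp, hp', _⟩ => le_antisymm (hp.elim (·.2.1) (·.1.2)) hp')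
      (volume_fst_preimage_singleton m.1)
  rw [upperTriangle_eq_union h,
    setIntegral_union₀ hAQB (isClosed_upperTriangle m s).nullMeasurableSet (hA.union hQ) hB,
    setIntegral_union₀ hAQ (measurableSet_Icc.prod measurableSet_Icc).nullMeasurableSet hA hQ]

theorem setIntegral_preimage_swap (g : ℝ × ℝ → E) (S : Set (ℝ × ℝ)) :
    ∫ p in Prod.swap ⁻¹' S, g p = ∫ p in S, g p.swap :=
  Measure.measurePreserving_swap.setIntegral_preimage_emb
    MeasurableEquiv.prodComm.measurableEmbedding (g ∘ Prod.swap) S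

theorem setIntegral_lowerTriangle_eq {r s : ℝ × ℝ} (h : r ≤ s) (hg : IntegrableOn g (Icc r s)) :
    ∫ p in lowerTriangle r s, g p =
      (∫ p in lowerTriangle r ((r.1 + s.1) / 2, (r.2 + s.2) / 2), g p) +
        (∫ p in Icc ((r.1 + s.1) / 2) s.1 ×ˢ Icc r.2 ((r.2 + s.2) / 2), g p) +
        ∫ p in lowerTriangle ((r.1 + s.1) / 2, (r.2 + s.2) / 2) s, g p := by
  rw [← preimage_swap_upperTriangle, ← preimage_swap_upperTriangle,
    ← preimage_swap_upperTriangle, ← preimage_swap_prod]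
  simp only [setIntegral_preimage_swap]
  exact setIntegral_upperTriangle_eq (Prod.swap_le_swap.2 h) hg.comp_swap_Icc

end VectorValued

theorem continuous_mixedPartial {f : ℝ × ℝ → ℝ} (hf : ContDiff ℝ 2 f) :
    Continuous (mixedPartial f) := by
  set g : ℝ × ℝ → ℝ := fun p => fderiv ℝ f p (0, 1)
  have hg : ContDiff ℝ 1 g :=
    (ContinuousLinearMap.apply ℝ ℝ ((0, 1) : ℝ × ℝ)).contDiff.comp
      (hf.fderiv_right (by norm_num))
  have hmixed : mixedPartial f = fun p => fderiv ℝ g p (1, 0) := by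
    funext ⟨x, y⟩
    simp only [mixedPartial, deriv_comp_prodMk_right ((hf.differentiable (by norm_num)) _)]
    exact deriv_comp_prodMk_left ((hg.differentiable one_ne_zero) _)
  rw [hmixed]
  exact (ContinuousLinearMap.apply ℝ ℝ ((1, 0) : ℝ × ℝ)).continuous.comp
    (hg.continuous_fderiv one_ne_zero)

theorem quarter_rectangle_integrals_eq
    (f : ℝ × ℝ → ℝ) (hf : ContDiff ℝ 2 f)
    (h : ∀ r s : ℝ × ℝ, r.1 ≤ s.1 → r.2 ≤ s.2 →
      (∫ p in upperTriangle r s, mixedPartial f p) =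
        ∫ p in lowerTriangle r s, mixedPartial f p) :
    ∀ r s : ℝ × ℝ, r.1 ≤ s.1 → r.2 ≤ s.2 →
      (∫ p in Set.Icc r.1 ((r.1 + s.1) / 2) ×ˢ Set.Icc ((r.2 + s.2) / 2) s.2,
          mixedPartial f p) =
        ∫ p in Set.Icc ((r.1 + s.1) / 2) s.1 ×ˢ Set.Icc r.2 ((r.2 + s.2) / 2),
          mixedPartial f p := by
  intro r s h₁ h₂
  have hrs : r ≤ s := ⟨h₁, h₂⟩
  obtain ⟨hrm, hms⟩ := mk_half_add_mem_Icc hrs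
  have hg : IntegrableOn (mixedPartial f) (Icc r s) :=
    (continuous_mixedPartial hf).integrableOn_Icc
  have hwhole := h r s h₁ h₂
  rw [setIntegral_upperTriangle_eq hrs hg, setIntegral_lowerTriangle_eq hrs hg,
    h r _ hrm.1 hrm.2, h _ s hms.1 hms.2] at hwhole
  exact add_left_cancel (add_right_cancel hwhole)
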